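/- arXiv:2602.19904 — 8 statements merged into one kernel-verified Lean document; each statement's English description precedes it below -/
import Mathlib

section
/- Let S be a left restriction monoid. Put M = Tot(S) and E = Proj(S), define m∗e = (me)⁺ for m ∈ M, e ∈ E, and for each e ∈ E define m ≡ₑ n iff em = en (for m, n ∈ M). Then: (MP1) ∗ is a monoid action of M on E; (MP2) m∗1 = 1 for all m ∈ M; (MP3) m∗(ef) = (m∗e)(m∗f); (MP4) each ≡ₑ is a right congruence on M; (MP5) ≡₁ is the identity relation; (MP6) if f ≤ e then m ≡ₑ n implies m ≡_f n; (MP7) if a ≡ₑ a′ then ma ≡_{m∗e} ma′ for any m ∈ M; (MP8) if a ≡ₑ a′ then e(a∗f) = e(a′∗f) for any f ∈ E. That is, [Proj(S)|Tot(S)] is a matched pair. -/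
/-- A left restriction monoid: a monoid with a unary operation `plus` (written `s⁺` in the
paper) satisfying (LR1)–(LR6). -/
class LeftRestrictionMonoid (S : Type*) extends Monoid S where
  plus : S → S
  lr1 : ∀ s : S, plus (plus s) = plus s
  lr2 : ∀ s t : S, plus (plus s * plus t) = plus s * plus t
  lr3 : ∀ s t : S, plus s * plus t = plus t * plus s
  lr4 : ∀ s : S, plus s * s = s
  lr5 : ∀ s t : S, plus (s * t) = plus (s * plus t)
  lr6 : ∀ s t : S, s * plus t = plus (s * t) * s

namespace LeftRestrictionMonoid

variable {S : Type*} [LeftRestrictionMonoid S]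

/-- The set of projections: elements with `a⁺ = a`. -/
def Proj (S : Type*) [LeftRestrictionMonoid S] : Set S := {a | plus a = a}

/-- The set of total elements: elements with `a⁺ = 1`. -/
def Tot (S : Type*) [LeftRestrictionMonoid S] : Set S := {a | plus a = 1}

/-- The natural partial order: `s ≤ t` iff `s = s⁺ t`. -/
def nle (s t : S) : Prop := s = plus s * t

end LeftRestrictionMonoid

open LeftRestrictionMonoid

namespace LeftRestrictionMonoid

variable {S : Type*} [LeftRestrictionMonoid S]

theorem plus_mem_proj (s : S) : plus s ∈ Proj S := lr1 s

theorem mul_eq_plus_mul_mul_of_mem_proj {e : S} (he : e ∈ Proj S) (m : S) :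
    m * e = plus (m * e) * m := by
  conv_lhs => rw [← he]
  exact lr6 m e

theorem plus_mul_mul_of_mem_proj {e : S} (he : e ∈ Proj S) (m f : S) :
    plus (m * (e * f)) = plus (m * e) * plus (m * f) :=
  calc plus (m * (e * f)) = plus (plus (m * e) * (m * f)) := by
        rw [← mul_assoc, ← mul_assoc, ← mul_eq_plus_mul_mul_of_mem_proj he m]
    _ = plus (plus (m * e) * plus (m * f)) := lr5 _ _
    _ = plus (m * e) * plus (m * f) := lr2 _ _

theorem plus_mul_mul_mul_of_mem_proj {e : S} (he : e ∈ Proj S) (m a : S) :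
    plus (m * e) * (m * a) = m * (e * a) := by
  rw [← mul_assoc, ← mul_eq_plus_mul_mul_of_mem_proj he, mul_assoc]

theorem mul_plus_mul_congr {e a a' : S} (h : e * a = e * a') (f : S) :
    e * plus (a * f) = e * plus (a' * f) := by
  rw [lr6, lr6, ← mul_assoc, ← mul_assoc, h]

theorem nle.mul_congr {e f m n : S} (hle : nle f e) (h : e * m = e * n) : f * m = f * n := by
  rw [hle, mul_assoc, mul_assoc, h]

end LeftRestrictionMonoid

/-- with `M = Tot S`, `E = Proj S`, `m ∗ e = (m e)⁺`, and `m ≡ₑ n ↔ e m = e n`,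
the axioms (MP1)–(MP8) hold, i.e. `[Proj(S)|Tot(S)]` is a matched pair. -/
theorem statement1 (S : Type*) [LeftRestrictionMonoid S] :
    -- (MP1): ∗ is a monoid action of M on E
    (∀ m : S, ∀ e : S, m ∈ Tot S → e ∈ Proj S → plus (m * e) ∈ Proj S) ∧
    (∀ e : S, e ∈ Proj S → plus ((1 : S) * e) = e) ∧
    (∀ m n e : S, m ∈ Tot S → n ∈ Tot S → e ∈ Proj S →
      plus ((m * n) * e) = plus (m * plus (n * e))) ∧
    -- (MP2): m ∗ 1 = 1 (the top of E is the identity 1)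
    (∀ m : S, m ∈ Tot S → plus (m * 1) = 1) ∧
    -- (MP3): m ∗ (e f) = (m ∗ e)(m ∗ f)
    (∀ m e f : S, m ∈ Tot S → e ∈ Proj S → f ∈ Proj S →
      plus (m * (e * f)) = plus (m * e) * plus (m * f)) ∧
    -- (MP4): each ≡ₑ is a right congruence on M
    (∀ e : S, e ∈ Proj S → Equivalence (fun m n : S => e * m = e * n)) ∧
    (∀ e m n a : S, e ∈ Proj S → m ∈ Tot S → n ∈ Tot S → a ∈ Tot S →
      e * m = e * n → e * (m * a) = e * (n * a)) ∧
    -- (MP5): ≡₁ is the identity relation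
    (∀ m n : S, m ∈ Tot S → n ∈ Tot S → (1 : S) * m = 1 * n → m = n) ∧
    -- (MP6): f ≤ e and m ≡ₑ n imply m ≡_f n
    (∀ e f m n : S, e ∈ Proj S → f ∈ Proj S → m ∈ Tot S → n ∈ Tot S →
      nle f e → e * m = e * n → f * m = f * n) ∧
    -- (MP7): a ≡ₑ a' implies m a ≡_{m ∗ e} m a'
    (∀ e m a a' : S, e ∈ Proj S → m ∈ Tot S → a ∈ Tot S → a' ∈ Tot S →
      e * a = e * a' → plus (m * e) * (m * a) = plus (m * e) * (m * a')) ∧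
    -- (MP8): a ≡ₑ a' implies e (a ∗ f) = e (a' ∗ f)
    (∀ e a a' f : S, e ∈ Proj S → a ∈ Tot S → a' ∈ Tot S → f ∈ Proj S →
      e * a = e * a' → e * plus (a * f) = e * plus (a' * f)) := by
  refine ⟨fun m e _ _ => plus_mem_proj (m * e), fun e he => by rwa [one_mul],
    fun m n e _ _ _ => by rw [mul_assoc, lr5], fun m hm => by rwa [mul_one],
    fun m e f _ he _ => plus_mul_mul_of_mem_proj he m f,
    fun e _ => ⟨fun _ => rfl, Eq.symm, Eq.trans⟩,
    fun e m n a _ _ _ _ h => by rw [← mul_assoc, ← mul_assoc, h],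
    fun m n _ _ h => by rwa [one_mul, one_mul] at h,
    fun e f m n _ _ _ _ hle h => hle.mul_congr h,
    fun e m a a' he _ _ _ h => by
      rw [plus_mul_mul_mul_of_mem_proj he, plus_mul_mul_mul_of_mem_proj he, h],
    fun e a a' f _ _ _ _ h => mul_plus_mul_congr h f⟩
end

section
/- Let [E|M] be a matched pair. Then on the set S[E|M] of pairs (e, [a]ₑ): (i) the multiplication (e,[a]ₑ)(f,[b]_f) = (e(a∗f), [ab]_{e(a∗f)}) is well defined (independent of the chosen representatives a and b of the congruence classes); (ii) this multiplication is associative with identity (1,[1]₁), so S[E|M] is a monoid; (iii) with the unary operation (e,[a]ₑ)⁺ = (e,[1]ₑ), the axioms (LR1)–(LR6) hold, so S[E|M] is a left restriction monoid. -/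
/-- A matched pair `[E|M]`: a monoid `M`, a meet semilattice `E` with a top element
(meet written as multiplication in the paper, here `⊓`, with top `⊤` playing the role of 1),
a monoid action of `M` on `E` and a right congruence `≡ₑ` on `M` for each `e ∈ E`,
satisfying (MP2), (MP3), (MP5)–(MP8). -/
structure MatchedPair (E M : Type*) [SemilatticeInf E] [OrderTop E] [Monoid M] where
  act : M → E → E
  act_one : ∀ e : E, act 1 e = e
  act_mul : ∀ m n : M, ∀ e : E, act (m * n) e = act m (act n e)
  mp2 : ∀ m : M, act m ⊤ = ⊤
  mp3 : ∀ m : M, ∀ e f : E, act m (e ⊓ f) = act m e ⊓ act m f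
  r : E → M → M → Prop
  requiv : ∀ e : E, Equivalence (r e)
  rcong : ∀ e : E, ∀ m n a : M, r e m n → r e (m * a) (n * a)
  mp5 : ∀ m n : M, r ⊤ m n → m = n
  mp6 : ∀ e f : E, ∀ m n : M, f ≤ e → r e m n → r f m n
  mp7 : ∀ e : E, ∀ m a a' : M, r e a a' → r (act m e) (m * a) (m * a')
  mp8 : ∀ e : E, ∀ a a' : M, ∀ f : E, r e a a' → e ⊓ act a f = e ⊓ act a' f

namespace MatchedPair

variable {E M : Type*} [SemilatticeInf E] [OrderTop E] [Monoid M]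

/-- Representative-level multiplication on pairs `(e, a)`, representing the
multiplication `(e,[a]ₑ)(f,[b]_f) = (e(a∗f), [ab]_{e(a∗f)})` on `S[E|M]`. -/
def mulRep (P : MatchedPair E M) (x y : E × M) : E × M :=
  (x.1 ⊓ P.act x.2 y.1, x.2 * y.2)

/-- Representative-level unary operation `(e,[a]ₑ)⁺ = (e,[1]ₑ)`. -/
def plusRep (x : E × M) : E × M := (x.1, 1)

/-- The relation identifying representatives of the same element of `S[E|M]`:
`(e, a)` and `(f, b)` represent the same element iff `e = f` and `a ≡ₑ b`. -/
def eqvRep (P : MatchedPair E M) (x y : E × M) : Prop :=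
  x.1 = y.1 ∧ P.r x.1 x.2 y.2

/-- Representative-level natural partial order on `S[E|M]`: `x ≤ y` iff `x = x⁺ y`. -/
def nleRep (P : MatchedPair E M) (x y : E × M) : Prop :=
  P.eqvRep x (P.mulRep (plusRep x) y)

end MatchedPair

open MatchedPair

/-!
Apart from well-definedness, every identity already holds on representatives `(e, a) : E × M`,
by the action laws and the semilattice laws of `E`. For well-definedness, (MP8) makes the
idempotent part `e ⊓ a ∗ f` independent of `a`; changing `a` is then absorbed by right
compatibility and (MP6), and changing `b` by (MP7) followed by (MP6), since `e ⊓ a ∗ f ≤ a ∗ f`.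
-/

namespace MatchedPair

variable {E M : Type*} [SemilatticeInf E] [OrderTop E] [Monoid M] (P : MatchedPair E M)

theorem eqvRep_of_eq {x y : E × M} (h : x = y) : P.eqvRep x y :=
  h ▸ ⟨rfl, (P.requiv x.1).refl x.2⟩

theorem mulRep_congr {x x' y y' : E × M} (hx : P.eqvRep x x') (hy : P.eqvRep y y') :
    P.eqvRep (P.mulRep x y) (P.mulRep x' y') := by
  obtain ⟨e, a⟩ := x
  obtain ⟨e', a'⟩ := x'
  obtain ⟨f, b⟩ := y
  obtain ⟨f', b'⟩ := y'
  obtain ⟨rfl, ha⟩ := hx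
  obtain ⟨rfl, hb⟩ := hy
  have hidem : e ⊓ P.act a f = e ⊓ P.act a' f := P.mp8 e a a' f ha
  have hleft : P.r (e ⊓ P.act a f) (a * b) (a' * b) :=
    P.mp6 e _ _ _ inf_le_left (P.rcong e a a' b ha)
  have hright : P.r (e ⊓ P.act a f) (a' * b) (a' * b') :=
    P.mp6 _ _ _ _ (hidem ▸ inf_le_right) (P.mp7 f a' b b' hb)
  exact ⟨hidem, (P.requiv _).trans hleft hright⟩

theorem plusRep_congr {x x' : E × M} (hx : P.eqvRep x x') :
    P.eqvRep (plusRep x) (plusRep x') :=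
  ⟨hx.1, (P.requiv _).refl 1⟩

theorem mulRep_assoc (x y z : E × M) :
    P.mulRep (P.mulRep x y) z = P.mulRep x (P.mulRep y z) := by
  simp only [mulRep, P.act_mul, P.mp3, inf_assoc, mul_assoc]

theorem top_one_mulRep (x : E × M) : P.mulRep (⊤, 1) x = x := by
  simp only [mulRep, P.act_one, top_inf_eq, one_mul]

theorem mulRep_top_one (x : E × M) : P.mulRep x (⊤, 1) = x := by
  simp only [mulRep, P.mp2, inf_top_eq, mul_one]

theorem mulRep_plusRep_left (x y : E × M) : P.mulRep (plusRep x) y = (x.1 ⊓ y.1, y.2) := by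
  simp only [mulRep, plusRep, P.act_one, one_mul]

theorem mulRep_plusRep_right (x y : E × M) :
    P.mulRep x (plusRep y) = P.mulRep (plusRep (P.mulRep x y)) x := by
  rw [mulRep_plusRep_left]
  exact Prod.ext (inf_of_le_left inf_le_left).symm (mul_one x.2)

end MatchedPair

/-- on `S[E|M]` (pairs `(e,[a]ₑ)`, here handled at the level of representatives
`(e,a) : E × M` modulo `eqvRep`): (i) the multiplication and the plus operation are well
defined; (ii) multiplication is associative with identity `(⊤,[1])`, so `S[E|M]` is a monoid;
(iii) the axioms (LR1)–(LR6) hold, so `S[E|M]` is a left restriction monoid. -/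
theorem statement3 {E M : Type*} [SemilatticeInf E] [OrderTop E] [Monoid M]
    (P : MatchedPair E M) :
    -- (i) well-definedness of multiplication and plus
    (∀ x x' y y' : E × M, P.eqvRep x x' → P.eqvRep y y' →
      P.eqvRep (P.mulRep x y) (P.mulRep x' y')) ∧
    (∀ x x' : E × M, P.eqvRep x x' → P.eqvRep (plusRep x) (plusRep x')) ∧
    -- (ii) associativity and identity
    (∀ x y z : E × M, P.eqvRep (P.mulRep (P.mulRep x y) z) (P.mulRep x (P.mulRep y z))) ∧
    (∀ x : E × M, P.eqvRep (P.mulRep ((⊤ : E), (1 : M)) x) x) ∧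
    (∀ x : E × M, P.eqvRep (P.mulRep x ((⊤ : E), (1 : M))) x) ∧
    -- (iii) the left restriction monoid axioms (LR1)–(LR6)
    (∀ x : E × M, P.eqvRep (plusRep (plusRep x)) (plusRep x)) ∧
    (∀ x y : E × M,
      P.eqvRep (plusRep (P.mulRep (plusRep x) (plusRep y))) (P.mulRep (plusRep x) (plusRep y))) ∧
    (∀ x y : E × M, P.eqvRep (P.mulRep (plusRep x) (plusRep y)) (P.mulRep (plusRep y) (plusRep x))) ∧
    (∀ x : E × M, P.eqvRep (P.mulRep (plusRep x) x) x) ∧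
    (∀ x y : E × M, P.eqvRep (plusRep (P.mulRep x y)) (plusRep (P.mulRep x (plusRep y)))) ∧
    (∀ x y : E × M, P.eqvRep (P.mulRep x (plusRep y)) (P.mulRep (plusRep (P.mulRep x y)) x)) := by
  refine ⟨fun _ _ _ _ => P.mulRep_congr, fun _ _ => P.plusRep_congr,
    fun x y z => P.eqvRep_of_eq (P.mulRep_assoc x y z),
    fun x => P.eqvRep_of_eq (P.top_one_mulRep x), fun x => P.eqvRep_of_eq (P.mulRep_top_one x),
    fun x => P.eqvRep_of_eq rfl, fun x y => P.eqvRep_of_eq ?_, fun x y => P.eqvRep_of_eq ?_,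
    fun x => P.eqvRep_of_eq ?_, fun x y => P.eqvRep_of_eq rfl,
    fun x y => P.eqvRep_of_eq (P.mulRep_plusRep_right x y)⟩
  · rw [mulRep_plusRep_left]
    rfl
  · rw [mulRep_plusRep_left, mulRep_plusRep_left, inf_comm]
    rfl
  · rw [mulRep_plusRep_left, inf_idem]
end

section
/- Let [E|M] be a matched pair and let S = S[E|M] be the associated left restriction monoid. Then: (i) the projections of S are exactly the elements of the form (e,[1]ₑ); (ii) the total elements of S are exactly the elements of the form (1,[a]₁); (iii) the natural partial order on S is given by (e,[a]ₑ) ≤ (f,[b]_f) if and only if e ≤ f in E and a ≡ₑ b; (iv) S is factorizable, since (e,[a]ₑ) ≤ (1,[a]₁) for all e ∈ E, a ∈ M. -/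
namespace MatchedPair

variable {E M : Type*} [SemilatticeInf E] [OrderTop E] [Monoid M]

theorem eqvRep_refl (P : MatchedPair E M) (x : E × M) : P.eqvRep x x :=
  ⟨rfl, (P.requiv x.1).refl x.2⟩

theorem mulRep_plusRep (P : MatchedPair E M) (x y : E × M) :
    P.mulRep (plusRep x) y = (x.1 ⊓ y.1, y.2) := by
  simp only [mulRep, plusRep, P.act_one, one_mul]

theorem eqvRep_plusRep_self_iff (P : MatchedPair E M) (x : E × M) :
    P.eqvRep (plusRep x) x ↔ ∃ e : E, P.eqvRep x (e, (1 : M)) := by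
  constructor
  · rintro ⟨-, h⟩
    exact ⟨x.1, rfl, (P.requiv x.1).symm h⟩
  · rintro ⟨e, rfl, h⟩
    exact ⟨rfl, (P.requiv _).symm h⟩

theorem eqvRep_plusRep_top_iff (P : MatchedPair E M) (x : E × M) :
    P.eqvRep (plusRep x) ((⊤ : E), (1 : M)) ↔ ∃ a : M, P.eqvRep x ((⊤ : E), a) := by
  constructor
  · rintro ⟨h, -⟩
    exact ⟨x.2, h, (P.requiv x.1).refl x.2⟩
  · rintro ⟨a, h, -⟩
    exact ⟨h, h ▸ (P.requiv ⊤).refl 1⟩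

theorem nleRep_iff (P : MatchedPair E M) (e f : E) (a b : M) :
    P.nleRep (e, a) (f, b) ↔ e ≤ f ∧ P.r e a b := by
  rw [nleRep, mulRep_plusRep, eqvRep, ← inf_eq_left (a := e)]
  exact and_congr eq_comm Iff.rfl

theorem nleRep_top (P : MatchedPair E M) (e : E) (a : M) : P.nleRep (e, a) ((⊤ : E), a) :=
  (P.nleRep_iff e ⊤ a a).2 ⟨le_top, (P.requiv e).refl a⟩

end MatchedPair

open MatchedPair

/-- in `S = S[E|M]` (at the level of representatives modulo `eqvRep`):
(i) the projections (elements with `x⁺ = x`) are exactly those of the form `(e,[1]ₑ)`;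
(ii) the total elements (elements with `x⁺ = 1`, the identity being `(⊤,[1])`) are exactly
those of the form `(⊤,[a])`; (iii) the natural partial order is given by
`(e,[a]ₑ) ≤ (f,[b]_f)` iff `e ≤ f` and `a ≡ₑ b`; (iv) `S` is factorizable:
`(e,[a]ₑ) ≤ (⊤,[a])`, a total element. -/
theorem statement4 {E M : Type*} [SemilatticeInf E] [OrderTop E] [Monoid M]
    (P : MatchedPair E M) :
    -- (i) projections
    (∀ x : E × M, P.eqvRep (plusRep x) x ↔ ∃ e : E, P.eqvRep x (e, (1 : M))) ∧
    -- (ii) total elements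
    (∀ x : E × M, P.eqvRep (plusRep x) ((⊤ : E), (1 : M)) ↔ ∃ a : M, P.eqvRep x ((⊤ : E), a)) ∧
    -- (iii) the natural partial order
    (∀ e f : E, ∀ a b : M, P.nleRep (e, a) (f, b) ↔ e ≤ f ∧ P.r e a b) ∧
    -- (iv) factorizability
    (∀ e : E, ∀ a : M,
      P.nleRep (e, a) ((⊤ : E), a) ∧ P.eqvRep (plusRep ((⊤ : E), a)) ((⊤ : E), (1 : M))) :=
  ⟨P.eqvRep_plusRep_self_iff, P.eqvRep_plusRep_top_iff, P.nleRep_iff,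
    fun e a => ⟨P.nleRep_top e a, P.eqvRep_refl _⟩⟩
end

section
/- Let S be a factorizable left restriction monoid and let Ŝ = S[Proj(S)|Tot(S)] be the left restriction monoid constructed from its associated matched pair. Then: (i) for every a ∈ S, if m and n are total elements with a ≤ m and a ≤ n, then a⁺m = a⁺n, so the map θ : S → Ŝ given by θ(a) = (a⁺, [m]_{a⁺}) (m any total element above a) is well defined; (ii) θ is bijective; (iii) θ is a homomorphism of left restriction monoids, i.e. θ(ab) = θ(a)θ(b), θ(1) = 1, and θ(a⁺) = θ(a)⁺. Hence every factorizable left restriction monoid is isomorphic to one of the form S[E|M]. -/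
open LeftRestrictionMonoid

/-!
Below a total element `m`, an element `a` is recovered as `a = a⁺ m`, so `θ(a)` determines `a`
and every class `(e, [m]ₑ)` is hit by `e m`. Multiplicativity comes from pushing the projection
`b⁺` to the left past `m` with (LR6): `m b⁺ = (m b⁺)⁺ m`, which gives
`ab = a⁺ (m b⁺)⁺ · mn` and `(ab)⁺ = a⁺ (m b⁺)⁺`.
-/

namespace LeftRestrictionMonoid

variable {S : Type*} [LeftRestrictionMonoid S]

theorem plus_one_eq_one : plus (1 : S) = 1 := by
  simpa using lr4 (1 : S)

theorem plus_plus_mul (s t : S) : plus (plus s * t) = plus s * plus t := by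
  rw [lr5, lr2]

theorem nle.plus_mul_eq {a m : S} (h : nle a m) : plus a * m = a :=
  h.symm

theorem plus_mul_tot {e m : S} (he : e ∈ Proj S) (hm : m ∈ Tot S) : plus (e * m) = e := by
  rw [lr5, hm, mul_one]
  exact he

theorem nle_mul_tot {e m : S} (he : e ∈ Proj S) (hm : m ∈ Tot S) : nle (e * m) m := by
  rw [nle, plus_mul_tot he hm]

theorem plus_mul_of_nle {a m : S} (ham : nle a m) (b : S) :
    plus (a * b) = plus a * plus (m * plus b) :=
  calc plus (a * b) = plus (a * plus b) := lr5 a b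
    _ = plus (plus a * (m * plus b)) := by rw [← mul_assoc, ← ham]
    _ = plus a * plus (m * plus b) := plus_plus_mul a (m * plus b)

theorem mul_eq_of_nle {a b m n : S} (ham : nle a m) (hbn : nle b n) :
    a * b = plus (a * b) * (m * n) :=
  calc a * b = plus a * (m * plus b) * n := by
        conv_lhs => rw [← ham.plus_mul_eq, ← hbn.plus_mul_eq]
        simp only [mul_assoc]
    _ = plus a * (plus (m * plus b) * m) * n := by rw [← lr6, lr1]
    _ = plus (a * b) * (m * n) := by rw [plus_mul_of_nle ham]; simp only [mul_assoc]

end LeftRestrictionMonoid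

theorem statement6_general (S : Type*) [LeftRestrictionMonoid S] :
    -- (i) θ is well defined: any two total elements above a give the same class
    (∀ a m n : S, m ∈ Tot S → n ∈ Tot S → nle a m → nle a n → plus a * m = plus a * n) ∧
    -- (ii) θ is injective
    (∀ a b m n : S, m ∈ Tot S → n ∈ Tot S → nle a m → nle b n →
      plus a = plus b → plus a * m = plus b * n → a = b) ∧
    -- (ii) θ is surjective: every pair (e, [m]ₑ) is in the image
    (∀ e m : S, e ∈ Proj S → m ∈ Tot S → ∃ a : S, plus a = e ∧ nle a m) ∧
    -- (iii) θ is multiplicative: θ(ab) = θ(a)θ(b), where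
    -- θ(a)θ(b) = (a⁺, [m]) (b⁺, [n]) = (a⁺ (m b⁺)⁺, [m n]) and θ(ab) = ((ab)⁺, [k])
    (∀ a b m n k : S, m ∈ Tot S → n ∈ Tot S → k ∈ Tot S →
      nle a m → nle b n → nle (a * b) k →
      plus (a * b) = plus a * plus (m * plus b) ∧
      plus (a * b) * k = plus (a * b) * (m * n)) ∧
    -- (iii) θ(1) = 1 = (1, [1])
    (∀ k : S, k ∈ Tot S → nle 1 k →
      plus (1 : S) = (1 : S) ∧ plus (1 : S) * k = plus (1 : S) * 1) ∧
    -- (iii) θ(a⁺) = θ(a)⁺, where θ(a)⁺ = (a⁺, [1]) and θ(a⁺) = ((a⁺)⁺, [k])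
    (∀ a m k : S, m ∈ Tot S → k ∈ Tot S → nle a m → nle (plus a) k →
      plus (plus a) = plus a ∧ plus (plus a) * k = plus a * 1) := by
  refine ⟨?_, ?_, ?_, ?_, ?_, ?_⟩
  · intro a m n _ _ ham han
    rw [ham.plus_mul_eq, han.plus_mul_eq]
  · intro a b m n _ _ ham hbn _ heq
    rw [← ham.plus_mul_eq, ← hbn.plus_mul_eq, heq]
  · intro e m he hm
    exact ⟨e * m, plus_mul_tot he hm, nle_mul_tot he hm⟩
  · intro a b m n k _ _ _ ham hbn habk
    exact ⟨plus_mul_of_nle ham b, by rw [habk.plus_mul_eq, ← mul_eq_of_nle ham hbn]⟩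
  · intro k _ h1k
    exact ⟨plus_one_eq_one, by rw [h1k.plus_mul_eq, plus_one_eq_one, mul_one]⟩
  · intro a m k _ _ _ hak
    exact ⟨lr1 a, by rw [hak.plus_mul_eq, mul_one]⟩

/-- let `S` be a factorizable left restriction monoid, and let
`Ŝ = S[Proj(S)|Tot(S)]`, whose elements are represented by pairs `(e, m)` with `e` a
projection and `m` a total element, two representatives `(e,m)` and `(f,n)` being identified
iff `e = f` and `e m = e n`. The map `θ(a) = (a⁺, [m]_{a⁺})`, `m` any total element above `a`:
(i) is well defined; (ii) is bijective; (iii) is a homomorphism of left restriction monoids.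
Hence every factorizable left restriction monoid is isomorphic to one of the form `S[E|M]`. -/
theorem statement6 (S : Type*) [LeftRestrictionMonoid S]
    (hfac : ∀ s : S, ∃ m ∈ Tot S, nle s m) :
    -- (i) θ is well defined: any two total elements above a give the same class
    (∀ a m n : S, m ∈ Tot S → n ∈ Tot S → nle a m → nle a n → plus a * m = plus a * n) ∧
    -- (ii) θ is injective
    (∀ a b m n : S, m ∈ Tot S → n ∈ Tot S → nle a m → nle b n →
      plus a = plus b → plus a * m = plus b * n → a = b) ∧
    -- (ii) θ is surjective: every pair (e, [m]ₑ) is in the image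
    (∀ e m : S, e ∈ Proj S → m ∈ Tot S → ∃ a : S, plus a = e ∧ nle a m) ∧
    -- (iii) θ is multiplicative: θ(ab) = θ(a)θ(b), where
    -- θ(a)θ(b) = (a⁺, [m]) (b⁺, [n]) = (a⁺ (m b⁺)⁺, [m n]) and θ(ab) = ((ab)⁺, [k])
    (∀ a b m n k : S, m ∈ Tot S → n ∈ Tot S → k ∈ Tot S →
      nle a m → nle b n → nle (a * b) k →
      plus (a * b) = plus a * plus (m * plus b) ∧
      plus (a * b) * k = plus (a * b) * (m * n)) ∧
    -- (iii) θ(1) = 1 = (1, [1])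
    (∀ k : S, k ∈ Tot S → nle 1 k →
      plus (1 : S) = (1 : S) ∧ plus (1 : S) * k = plus (1 : S) * 1) ∧
    -- (iii) θ(a⁺) = θ(a)⁺, where θ(a)⁺ = (a⁺, [1]) and θ(a⁺) = ((a⁺)⁺, [k])
    (∀ a m k : S, m ∈ Tot S → k ∈ Tot S → nle a m → nle (plus a) k →
      plus (plus a) = plus a ∧ plus (plus a) * k = plus a * 1) :=
  statement6_general S
end

section
/- Let (S,X,p) be a supported action of a left restriction monoid S, and let Y = X₁ = { x ∈ X : p(x) = 1 }. Then: (i) Y is closed under the action of total elements, so Tot(S) acts on Y; (ii) defining, for each projection e, x ≡ₑ y iff e·x = e·y (for x,y ∈ Y), the following hold: each ≡ₑ is an equivalence relation on Y; ≡₁ is the identity relation (MPA3); if f ≤ e then x ≡ₑ y implies x ≡_f y (MPA4); if m, n are total with em = en and x ∈ Y then m·x ≡ₑ n·x (MPA5); and if x ≡ₑ y in Y and m is total then m·x ≡_{(me)⁺} m·y (MPA6). That is, Y is a [Proj(S)|Tot(S)]-set. -/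
open LeftRestrictionMonoid

/-- A supported action of a left restriction monoid `S` on a set `X`: a monoid action
together with a support map `p : X → Proj(S)` satisfying (E1) and (E2). -/
structure SupportedAction (S : Type*) [LeftRestrictionMonoid S] (X : Type*) where
  smul : S → X → X
  one_smul : ∀ x : X, smul 1 x = x
  mul_smul : ∀ s t : S, ∀ x : X, smul (s * t) x = smul s (smul t x)
  p : X → S
  p_proj : ∀ x : X, plus (p x) = p x
  e1 : ∀ x : X, smul (p x) x = x
  e2 : ∀ s : S, ∀ x : X, p (smul s x) = plus (s * p x)

/-- A homomorphism of supported actions: an `S`-equivariant map commuting with supports. -/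
def SupportedAction.IsHom {S X Y : Type*} [LeftRestrictionMonoid S]
    (A : SupportedAction S X) (B : SupportedAction S Y) (θ : X → Y) : Prop :=
  (∀ s : S, ∀ x : X, θ (A.smul s x) = B.smul s (θ x)) ∧ ∀ x : X, B.p (θ x) = A.p x

namespace LeftRestrictionMonoid

variable {S : Type*} [LeftRestrictionMonoid S]

theorem eq_mul_of_nle {e f : S} (hf : f ∈ Proj S) (hfe : nle f e) : f = f * e := by
  rwa [nle, show plus f = f from hf] at hfe

theorem plus_mul_mul_self {e : S} (he : e ∈ Proj S) (m : S) : plus (m * e) * m = m * e := by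
  rw [← lr6, show plus e = e from he]

end LeftRestrictionMonoid

namespace SupportedAction

variable {S X : Type*} [LeftRestrictionMonoid S] (A : SupportedAction S X)

theorem p_smul_eq_one {m : S} {x : X} (hm : m ∈ Tot S) (hx : A.p x = 1) :
    A.p (A.smul m x) = 1 := by
  rw [A.e2, hx, mul_one, hm]

theorem smul_eq_smul_of_nle {e f : S} {x y : X} (hf : f ∈ Proj S) (hfe : nle f e)
    (h : A.smul e x = A.smul e y) : A.smul f x = A.smul f y := by
  rw [eq_mul_of_nle hf hfe, A.mul_smul, A.mul_smul, h]

theorem smul_smul_eq_of_mul_eq {e m n : S} (x : X) (h : e * m = e * n) :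
    A.smul e (A.smul m x) = A.smul e (A.smul n x) := by
  rw [← A.mul_smul, ← A.mul_smul, h]

theorem plus_mul_smul_smul_eq {e : S} (he : e ∈ Proj S) (m : S) {x y : X}
    (h : A.smul e x = A.smul e y) :
    A.smul (plus (m * e)) (A.smul m x) = A.smul (plus (m * e)) (A.smul m y) := by
  rw [← A.mul_smul, ← A.mul_smul, plus_mul_mul_self he, A.mul_smul, A.mul_smul, h]

end SupportedAction

/-- for a supported action `(S,X,p)`, the set `Y = X₁ = {x : p x = 1}` is
closed under the action of total elements (so `Tot(S)` acts on `Y`), and defining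
`x ≡ₑ y ↔ e·x = e·y` for each projection `e`, the axioms making `Y` a
`[Proj(S)|Tot(S)]`-set hold: each `≡ₑ` is an equivalence, (MPA3)–(MPA6). -/
theorem statement11 {S X : Type*} [LeftRestrictionMonoid S] (A : SupportedAction S X) :
    -- (i) X₁ is closed under the action of total elements
    (∀ m : S, ∀ x : X, m ∈ Tot S → A.p x = 1 → A.p (A.smul m x) = 1) ∧
    -- (ii) each ≡ₑ is an equivalence relation
    (∀ e : S, e ∈ Proj S → Equivalence (fun x y : X => A.smul e x = A.smul e y)) ∧
    -- (MPA3): ≡₁ is the identity relation on X₁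
    (∀ x y : X, A.p x = 1 → A.p y = 1 → (A.smul 1 x = A.smul 1 y ↔ x = y)) ∧
    -- (MPA4): if f ≤ e then x ≡ₑ y implies x ≡_f y
    (∀ e f : S, ∀ x y : X, e ∈ Proj S → f ∈ Proj S → nle f e →
      A.smul e x = A.smul e y → A.smul f x = A.smul f y) ∧
    -- (MPA5): if m ≡ₑ n in Tot(S) and x ∈ X₁ then m·x ≡ₑ n·x
    (∀ e m n : S, ∀ x : X, e ∈ Proj S → m ∈ Tot S → n ∈ Tot S → A.p x = 1 →
      e * m = e * n → A.smul e (A.smul m x) = A.smul e (A.smul n x)) ∧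
    -- (MPA6): if x ≡ₑ y in X₁ and m is total then m·x ≡_{(m e)⁺} m·y
    (∀ e m : S, ∀ x y : X, e ∈ Proj S → m ∈ Tot S → A.p x = 1 → A.p y = 1 →
      A.smul e x = A.smul e y →
      A.smul (plus (m * e)) (A.smul m x) = A.smul (plus (m * e)) (A.smul m y)) := by
  refine ⟨fun m x hm hx => A.p_smul_eq_one hm hx,
    fun e _ => (Setoid.ker (A.smul e)).iseqv,
    fun x y _ _ => by rw [A.one_smul, A.one_smul],
    fun e f x y _ hf hfe h => A.smul_eq_smul_of_nle hf hfe h,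
    fun e m n x _ _ _ _ h => A.smul_smul_eq_of_mul_eq x h,
    fun e m x y he _ _ _ h => A.plus_mul_smul_smul_eq he m h⟩
end

section
/- Let S be a Boolean left restriction monoid, and consider the matched pair structure on [Proj(S)|Tot(S)] given by m∗e = (me)⁺ and m ≡ₑ n iff em = en. Then in addition to (MP1)–(MP8): (MP9) ≡₀ is the universal relation on Tot(S); (MP10) m∗(e + f) = m∗e + m∗f for all total m and projections e, f; (MP11) if m, n are total with em = en and fm = fn, then (e+f)m = (e+f)n; (MP12) for any total elements m, n and any projection e, the element p = em ∨ ēn is a well-defined total element satisfying ep = em and ēp = ēn. -/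
open LeftRestrictionMonoid

/-- A Boolean left restriction monoid: a left restriction monoid with a zero element which
is a projection, such that (B1) the projections form a Boolean algebra under the natural
partial order (with bottom 0, top 1, meet = multiplication, join `join` and complement
`compl`), (B2) right-compatible pairs (`a⁺ b = b⁺ a`) have joins in the natural partial
order (given by `join`), and (B3) multiplication distributes over such binary joins on both
sides. -/
class BooleanLeftRestrictionMonoid (S : Type*) extends LeftRestrictionMonoid S where
  zero : S
  zero_proj : plus zero = zero
  zero_mul' : ∀ s : S, zero * s = zero
  mul_zero' : ∀ s : S, s * zero = zero
  zero_ne_one : zero ≠ 1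
  join : S → S → S
  compl : S → S
  -- (B2): `join a b` is the least upper bound of right-compatible a, b in the natural order
  join_ub_left : ∀ a b : S, plus a * b = plus b * a → LeftRestrictionMonoid.nle a (join a b)
  join_ub_right : ∀ a b : S, plus a * b = plus b * a → LeftRestrictionMonoid.nle b (join a b)
  join_least : ∀ a b c : S, plus a * b = plus b * a →
    LeftRestrictionMonoid.nle a c → LeftRestrictionMonoid.nle b c →
    LeftRestrictionMonoid.nle (join a b) c
  -- (B1): the projections form a Boolean algebra
  join_proj : ∀ e f : S, plus e = e → plus f = f → plus (join e f) = join e f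
  compl_proj : ∀ e : S, plus e = e → plus (compl e) = compl e
  compl_inf : ∀ e : S, plus e = e → e * compl e = zero
  compl_sup : ∀ e : S, plus e = e → join e (compl e) = 1
  -- (B3): multiplication distributes over binary joins from both sides
  ldistrib : ∀ a b c : S, plus a * b = plus b * a → c * join a b = join (c * a) (c * b)
  rdistrib : ∀ a b c : S, plus a * b = plus b * a → join a b * c = join (a * c) (b * c)

open BooleanLeftRestrictionMonoid

/-!
(MP9) holds because `0` is a zero, and (MP11) is right distributivity. The key fact is that
`(a ∨ b)⁺ = a⁺ ∨ b⁺` for right-compatible `a`, `b`: with `g = a⁺ ∨ b⁺` one has `g (a ∨ b) = a ∨ b`,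
so `(a ∨ b)⁺ = g (a ∨ b)⁺`, while `a⁺ ≤ (a ∨ b)⁺` and `b⁺ ≤ (a ∨ b)⁺` give `g (a ∨ b)⁺ = g`.
Since `m e = (m e)⁺ m` for a projection `e`, the elements `m e` and `m f` are right-compatible,
and (MP10) follows by left distributivity. For (MP12), `e m` and `ē n` have the orthogonal
domains `e` and `ē`, so they are right-compatible and their join has domain `e + ē = 1`.
-/

namespace LeftRestrictionMonoid

variable {S : Type*} [LeftRestrictionMonoid S]

/-- The paper's `a ∼ᵣ b`. -/
def RightCompatible (a b : S) : Prop := plus a * b = plus b * a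

theorem nle_refl (s : S) : nle s s := (lr4 s).symm

theorem plus_mul_of_plus_eq {e f : S} (he : plus e = e) (hf : plus f = f) :
    plus (e * f) = e * f := by
  rw [← he, ← hf, lr2]

theorem mul_self_of_plus_eq {e : S} (he : plus e = e) : e * e = e := by
  nth_rewrite 1 [← he]
  exact lr4 e

theorem mul_comm_of_plus_eq {e f : S} (he : plus e = e) (hf : plus f = f) : e * f = f * e := by
  rw [← he, ← hf, lr3]

theorem rightCompatible_of_plus_eq {e f : S} (he : plus e = e) (hf : plus f = f) :
    RightCompatible e f := by
  rw [RightCompatible, he, hf, mul_comm_of_plus_eq he hf]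

theorem plus_mul_of_plus_eq_one {m : S} (hm : plus m = 1) (s : S) : plus (s * m) = plus s := by
  rw [lr5, hm, mul_one]

theorem plus_eq_plus_mul_plus_of_nle {s t : S} (h : nle s t) : plus s = plus s * plus t := by
  conv_lhs => rw [h, lr5, plus_mul_of_plus_eq (lr1 s) (lr1 t)]

theorem nle_antisymm {s t : S} (hst : nle s t) (hts : nle t s) : s = t := by
  have hplus : plus s = plus t := by
    rw [plus_eq_plus_mul_plus_of_nle hst, lr3, ← plus_eq_plus_mul_plus_of_nle hts]
  rw [hst, hplus, lr4]

theorem rightCompatible_mul_of_plus_eq (m : S) {e f : S} (he : plus e = e) (hf : plus f = f) :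
    RightCompatible (m * e) (m * f) := by
  have hme : m * e = plus (m * e) * m := by rw [← lr6, he]
  have hmf : m * f = plus (m * f) * m := by rw [← lr6, hf]
  calc plus (m * e) * (m * f) = plus (m * e) * plus (m * f) * m := by rw [mul_assoc, ← hmf]
    _ = plus (m * f) * plus (m * e) * m := by rw [lr3]
    _ = plus (m * f) * (m * e) := by rw [mul_assoc, ← hme]

end LeftRestrictionMonoid

namespace BooleanLeftRestrictionMonoid

variable {S : Type*} [BooleanLeftRestrictionMonoid S]

theorem zero_nle (s : S) : nle zero s := by
  rw [nle, zero_proj, zero_mul']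

theorem rightCompatible_zero_right (s : S) : RightCompatible s zero := by
  rw [RightCompatible, mul_zero', zero_proj, zero_mul']

theorem rightCompatible_zero_left (s : S) : RightCompatible zero s := by
  rw [RightCompatible, mul_zero', zero_proj, zero_mul']

theorem join_zero (s : S) : join s zero = s :=
  nle_antisymm (join_least s zero s (rightCompatible_zero_right s) (nle_refl s) (zero_nle s))
    (join_ub_left s zero (rightCompatible_zero_right s))

theorem zero_join (s : S) : join zero s = s :=
  nle_antisymm (join_least zero s s (rightCompatible_zero_left s) (zero_nle s) (nle_refl s))
    (join_ub_right zero s (rightCompatible_zero_left s))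

theorem plus_join {a b : S} (h : RightCompatible a b) :
    plus (join a b) = join (plus a) (plus b) := by
  set j := join a b
  have hplus : RightCompatible (plus a) (plus b) := rightCompatible_of_plus_eq (lr1 a) (lr1 b)
  have hja : plus a = plus a * plus j := plus_eq_plus_mul_plus_of_nle (join_ub_left a b h)
  have hjb : plus b = plus b * plus j := plus_eq_plus_mul_plus_of_nle (join_ub_right a b h)
  have hgj : join (plus a) (plus b) * j = j := by
    rw [rdistrib _ _ j hplus, ← join_ub_left a b h, ← join_ub_right a b h]
  calc plus j = plus (join (plus a) (plus b) * j) := by rw [hgj]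
    _ = join (plus a) (plus b) * plus j := by
      rw [lr5, plus_mul_of_plus_eq (join_proj _ _ (lr1 a) (lr1 b)) (lr1 j)]
    _ = join (plus a) (plus b) := by rw [rdistrib _ _ _ hplus, ← hja, ← hjb]

theorem compl_mul_self {e : S} (he : plus e = e) : compl e * e = zero := by
  rw [mul_comm_of_plus_eq (compl_proj e he) he, compl_inf e he]

theorem plus_mul_mul_compl {e : S} (he : plus e = e) (s : S) :
    plus (e * s) * compl e = zero := by
  rw [lr5, plus_mul_of_plus_eq he (lr1 s), mul_comm_of_plus_eq he (lr1 s), mul_assoc,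
    compl_inf e he, mul_zero']

theorem plus_compl_mul_mul {e : S} (he : plus e = e) (s : S) :
    plus (compl e * s) * e = zero := by
  rw [lr5, plus_mul_of_plus_eq (compl_proj e he) (lr1 s),
    mul_comm_of_plus_eq (compl_proj e he) (lr1 s), mul_assoc, compl_mul_self he, mul_zero']

theorem rightCompatible_mul_compl_mul {e : S} (he : plus e = e) (s t : S) :
    RightCompatible (e * s) (compl e * t) := by
  rw [RightCompatible, ← mul_assoc, ← mul_assoc, plus_mul_mul_compl he,
    plus_compl_mul_mul he, zero_mul', zero_mul']

end BooleanLeftRestrictionMonoid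

/-- for a Boolean left restriction monoid `S`, the matched pair
`[Proj(S)|Tot(S)]` (with `m ∗ e = (m e)⁺` and `m ≡ₑ n ↔ e m = e n`) satisfies, in addition
to (MP1)–(MP8), the axioms (MP9)–(MP12). -/
theorem statement16 {S : Type*} [BooleanLeftRestrictionMonoid S] :
    -- (MP9): ≡₀ is the universal relation on Tot(S)
    (∀ m n : S, m ∈ Tot S → n ∈ Tot S → zero * m = zero * n) ∧
    -- (MP10): m ∗ (e + f) = m ∗ e + m ∗ f
    (∀ m e f : S, m ∈ Tot S → e ∈ Proj S → f ∈ Proj S →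
      plus (m * join e f) = join (plus (m * e)) (plus (m * f))) ∧
    -- (MP11): if m ≡ₑ n and m ≡_f n then m ≡_{e+f} n
    (∀ m n e f : S, m ∈ Tot S → n ∈ Tot S → e ∈ Proj S → f ∈ Proj S →
      e * m = e * n → f * m = f * n → join e f * m = join e f * n) ∧
    -- (MP12): p = e m ∨ ē n is a well-defined total element with p ≡ₑ m and p ≡_{ē} n
    (∀ m n e : S, m ∈ Tot S → n ∈ Tot S → e ∈ Proj S →
      plus (e * m) * (compl e * n) = plus (compl e * n) * (e * m) ∧
      join (e * m) (compl e * n) ∈ Tot S ∧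
      e * join (e * m) (compl e * n) = e * m ∧
      compl e * join (e * m) (compl e * n) = compl e * n) := by
  refine ⟨fun m n _ _ => by rw [zero_mul', zero_mul'], ?_, ?_, ?_⟩
  · intro m e f _ he hf
    rw [ldistrib e f m (rightCompatible_of_plus_eq he hf)]
    exact plus_join (rightCompatible_mul_of_plus_eq m he hf)
  · intro m n e f _ _ he hf hem hfm
    rw [rdistrib e f m (rightCompatible_of_plus_eq he hf),
      rdistrib e f n (rightCompatible_of_plus_eq he hf), hem, hfm]
  · intro m n e hm hn he
    have hc : plus (compl e) = compl e := compl_proj e he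
    have hcompat := rightCompatible_mul_compl_mul he m n
    refine ⟨hcompat, ?_, ?_, ?_⟩
    · change plus (join (e * m) (compl e * n)) = 1
      rw [plus_join hcompat, plus_mul_of_plus_eq_one hm,
        plus_mul_of_plus_eq_one hn, he, hc, compl_sup e he]
    · rw [ldistrib _ _ e hcompat, ← mul_assoc, ← mul_assoc, mul_self_of_plus_eq he,
        compl_inf e he, zero_mul', join_zero]
    · rw [ldistrib _ _ _ hcompat, ← mul_assoc, ← mul_assoc, mul_self_of_plus_eq hc,
        compl_mul_self he, zero_mul', zero_join]
end

section
/- Let [B|M] be a matched pair in which B is a Boolean algebra, satisfying the additional axioms (MP9)–(MP12). Suppose m ≡_{ef} n for m, n ∈ M and e, f ∈ B. Then there exists p ∈ M such that p ≡ₑ m and p ≡_f n. Moreover, if p′ ∈ M is any element with p′ ≡ₑ m and p′ ≡_f n, then p ≡_{e+f} p′. -/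
/-- A matched pair `[B|M]` in the Boolean sense: a monoid `M`, a Boolean algebra `B`
(meet `⊓` playing the role of multiplication, join `⊔` of `+`, complement `ᶜ`, `⊥` of 0 and
`⊤` of 1), a monoid action of `M` on `B` and a right congruence `≡ₑ` on `M` for each
`e ∈ B`, satisfying (MP2), (MP3), (MP5)–(MP12). -/
structure BooleanMatchedPair (B M : Type*) [BooleanAlgebra B] [Monoid M] where
  act : M → B → B
  act_one : ∀ e : B, act 1 e = e
  act_mul : ∀ m n : M, ∀ e : B, act (m * n) e = act m (act n e)
  mp2 : ∀ m : M, act m ⊤ = ⊤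
  mp3 : ∀ m : M, ∀ e f : B, act m (e ⊓ f) = act m e ⊓ act m f
  r : B → M → M → Prop
  requiv : ∀ e : B, Equivalence (r e)
  rcong : ∀ e : B, ∀ m n a : M, r e m n → r e (m * a) (n * a)
  mp5 : ∀ m n : M, r ⊤ m n → m = n
  mp6 : ∀ e f : B, ∀ m n : M, f ≤ e → r e m n → r f m n
  mp7 : ∀ e : B, ∀ m a a' : M, r e a a' → r (act m e) (m * a) (m * a')
  mp8 : ∀ e : B, ∀ a a' : M, ∀ f : B, r e a a' → e ⊓ act a f = e ⊓ act a' f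
  mp9 : ∀ m n : M, r ⊥ m n
  mp10 : ∀ m : M, ∀ e f : B, act m (e ⊔ f) = act m e ⊔ act m f
  mp11 : ∀ e f : B, ∀ m n : M, r e m n → r f m n → r (e ⊔ f) m n
  mp12 : ∀ m n : M, ∀ e : B, ∃ p : M, r e p m ∧ r eᶜ p n

/-!
Glue `m` on `e` and `n` on `eᶜ` by (MP12). The glued element agrees with `n` on `e ⊓ f`
(through `m`) and on `eᶜ ⊓ f`, hence on `f = (e ⊓ f) ⊔ (eᶜ ⊓ f)` by (MP11). Uniqueness up to
`≡_{e ⊔ f}` is (MP11) again, applied to `≡ₑ` and `≡_f`.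
-/

namespace BooleanMatchedPair

variable {B M : Type*} [BooleanAlgebra B] [Monoid M] (P : BooleanMatchedPair B M)

theorem r_of_r_inf_of_r_compl_inf {e f : B} {p q : M} (h₁ : P.r (e ⊓ f) p q)
    (h₂ : P.r (eᶜ ⊓ f) p q) : P.r f p q := by
  have h := P.mp11 _ _ _ _ h₁ h₂
  rwa [← inf_sup_right, sup_compl_eq_top, top_inf_eq] at h

theorem exists_r_left_r_right_of_r_inf {e f : B} {m n : M} (h : P.r (e ⊓ f) m n) :
    ∃ p : M, P.r e p m ∧ P.r f p n := by
  obtain ⟨p, hpm, hpn⟩ := P.mp12 m n e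
  have hpn_inf : P.r (e ⊓ f) p n :=
    (P.requiv _).trans (P.mp6 _ _ _ _ inf_le_left hpm) h
  exact ⟨p, hpm, P.r_of_r_inf_of_r_compl_inf hpn_inf (P.mp6 _ _ _ _ inf_le_left hpn)⟩

theorem r_sup_of_r_of_r {e f : B} {m n p p' : M} (hpm : P.r e p m) (hp'm : P.r e p' m)
    (hpn : P.r f p n) (hp'n : P.r f p' n) : P.r (e ⊔ f) p p' :=
  P.mp11 _ _ _ _ ((P.requiv e).trans hpm ((P.requiv e).symm hp'm))
    ((P.requiv f).trans hpn ((P.requiv f).symm hp'n))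

end BooleanMatchedPair

/-- in a matched pair `[B|M]` with `B` a Boolean algebra (satisfying
(MP9)–(MP12)), if `m ≡_{ef} n` then there exists `p ∈ M` with `p ≡ₑ m` and `p ≡_f n`;
moreover any `p'` with `p' ≡ₑ m` and `p' ≡_f n` satisfies `p ≡_{e+f} p'`. -/
theorem statement17 {B M : Type*} [BooleanAlgebra B] [Monoid M]
    (P : BooleanMatchedPair B M) (m n : M) (e f : B) (h : P.r (e ⊓ f) m n) :
    ∃ p : M, P.r e p m ∧ P.r f p n ∧
      ∀ p' : M, P.r e p' m → P.r f p' n → P.r (e ⊔ f) p p' := by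
  obtain ⟨p, hpm, hpn⟩ := P.exists_r_left_r_right_of_r_inf h
  exact ⟨p, hpm, hpn, fun _ hp'm hp'n => P.r_sup_of_r_of_r hpm hp'm hpn hp'n⟩
end

section
/- Let [B|M] be a matched pair in which B is a Boolean algebra, satisfying the additional axioms (MP9)–(MP12), and let Y be a [B|M]-set satisfying the additional axioms (MPA7)–(MPA9). If x ≡_{ef} y for x, y ∈ Y and e, f ∈ B, then there exists w ∈ Y such that w ≡ₑ x and w ≡_f y; moreover, if w′ ∈ Y also satisfies w′ ≡ₑ x and w′ ≡_f y, then w ≡_{ef} w′. -/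
/-- A `[B|M]`-set for a Boolean matched pair: a set `Y` with a monoid action of `M` and an
equivalence relation `≡ₑ` on `Y` for each `e ∈ B`, satisfying (MPA3)–(MPA9). -/
structure BooleanMatchedPairSet {B M : Type*} [BooleanAlgebra B] [Monoid M]
    (P : BooleanMatchedPair B M) (Y : Type*) where
  act : M → Y → Y
  act_one : ∀ y : Y, act 1 y = y
  act_mul : ∀ m n : M, ∀ y : Y, act (m * n) y = act m (act n y)
  rY : B → Y → Y → Prop
  requiv : ∀ e : B, Equivalence (rY e)
  mpa3 : ∀ x y : Y, rY ⊤ x y → x = y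
  mpa4 : ∀ e f : B, ∀ x y : Y, f ≤ e → rY e x y → rY f x y
  mpa5 : ∀ e : B, ∀ m n : M, ∀ x : Y, P.r e m n → rY e (act m x) (act n x)
  mpa6 : ∀ e : B, ∀ m : M, ∀ x y : Y, rY e x y → rY (P.act m e) (act m x) (act m y)
  mpa7 : ∀ x y : Y, rY ⊥ x y
  mpa8 : ∀ e f : B, ∀ x x' : Y, rY e x x' → rY f x x' → rY (e ⊔ f) x x'
  mpa9 : ∀ x y : Y, ∀ e : B, ∃ z : Y, rY e z x ∧ rY eᶜ z y

/-!
Take `w` with `w ≡ₑ x` and `w ≡_{ē} y` (MPA9). On `ef` it agrees with `x`, hence with `y`;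
on `ēf` it agrees with `y`; since `ef + ēf = f`, gluing (MPA8) gives `w ≡_f y`.
-/
namespace BooleanMatchedPairSet

variable {B M Y : Type*} [BooleanAlgebra B] [Monoid M] {P : BooleanMatchedPair B M}
  (Q : BooleanMatchedPairSet P Y) {e f : B} {x y z : Y}

theorem rY_symm (h : Q.rY e x y) : Q.rY e y x := (Q.requiv e).symm h

theorem rY_trans (hxy : Q.rY e x y) (hyz : Q.rY e y z) : Q.rY e x z := (Q.requiv e).trans hxy hyz

theorem rY_of_le (hfe : f ≤ e) (h : Q.rY e x y) : Q.rY f x y := Q.mpa4 e f x y hfe h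

theorem rY_of_rY_inf_of_rY_compl_inf (h₁ : Q.rY (e ⊓ f) x y) (h₂ : Q.rY (eᶜ ⊓ f) x y) :
    Q.rY f x y := by
  have hsplit : (e ⊓ f) ⊔ (eᶜ ⊓ f) = f := by
    rw [← inf_sup_right, sup_compl_eq_top, top_inf_eq]
  simpa only [hsplit] using Q.mpa8 _ _ x y h₁ h₂

theorem exists_rY_rY_of_rY_inf (h : Q.rY (e ⊓ f) x y) : ∃ w, Q.rY e w x ∧ Q.rY f w y := by
  obtain ⟨w, hwx, hwy⟩ := Q.mpa9 x y e
  have hw_inf : Q.rY (e ⊓ f) w y := Q.rY_trans (Q.rY_of_le inf_le_left hwx) h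
  have hw_compl_inf : Q.rY (eᶜ ⊓ f) w y := Q.rY_of_le inf_le_left hwy
  exact ⟨w, hwx, Q.rY_of_rY_inf_of_rY_compl_inf hw_inf hw_compl_inf⟩

end BooleanMatchedPairSet

/-- let `[B|M]` be a Boolean matched pair (satisfying (MP9)–(MP12)) and `Y` a
`[B|M]`-set (satisfying (MPA7)–(MPA9)). If `x ≡_{ef} y` then there exists `w ∈ Y` with
`w ≡ₑ x` and `w ≡_f y`; moreover any `w'` with `w' ≡ₑ x` and `w' ≡_f y` satisfies
`w ≡_{ef} w'`. -/
theorem statement18 {B M Y : Type*} [BooleanAlgebra B] [Monoid M]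
    (P : BooleanMatchedPair B M) (Q : BooleanMatchedPairSet P Y)
    (x y : Y) (e f : B) (h : Q.rY (e ⊓ f) x y) :
    ∃ w : Y, Q.rY e w x ∧ Q.rY f w y ∧
      ∀ w' : Y, Q.rY e w' x → Q.rY f w' y → Q.rY (e ⊓ f) w w' := by
  obtain ⟨w, hwx, hwy⟩ := Q.exists_rY_rY_of_rY_inf h
  exact ⟨w, hwx, hwy, fun w' hw'x _ => Q.rY_of_le inf_le_left (Q.rY_trans hwx (Q.rY_symm hw'x))⟩
end
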